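/- Let 1/2 < s̄ ≤ 1 and 0 < ε < s̄ − 1/2. Then there exists a neighborhood U of (s̄, 1−s̄², 0, 0, 0) in ℝ⁵ such that for every solution Γ of the Bianchi class B system and every τ₀ ∈ ℝ with (Σ₊, Σ̃, Δ, Ã, N₊)(τ₀) ∈ U, one has |Σ₊(τ) − s̄| < ε for all τ ≤ τ₀. -/

import Mathlib

open Real Filter Topology MeasureTheory

noncomputable def NT (κ : ℝ) (Ap Np : ℝ → ℝ) (τ : ℝ) : ℝ :=
  (1/3) * ((Np τ)^2 - κ * Ap τ)

noncomputable def qF (γ κ : ℝ) (Sp St Ap Np : ℝ → ℝ) (τ : ℝ) : ℝ :=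
  (3/2)*(2-γ)*((Sp τ)^2 + St τ) + (1/2)*(3*γ-2)*(1 - Ap τ - NT κ Ap Np τ)

noncomputable def OmF (κ : ℝ) (Sp St Ap Np : ℝ → ℝ) (τ : ℝ) : ℝ :=
  1 - (Sp τ)^2 - St τ - Ap τ - NT κ Ap Np τ

/-- A solution of the Bianchi class B system in expansion-normalised variables. -/
structure BianchiB (γ κ : ℝ) (Sp St Dl Ap Np : ℝ → ℝ) : Prop where
  hγ : γ ∈ Set.Icc (0:ℝ) 2
  diff_Sp : Differentiable ℝ Sp
  diff_St : Differentiable ℝ St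
  diff_Dl : Differentiable ℝ Dl
  diff_Ap : Differentiable ℝ Ap
  diff_Np : Differentiable ℝ Np
  ev_Sp : ∀ τ, deriv Sp τ = (qF γ κ Sp St Ap Np τ - 2) * Sp τ - 2 * NT κ Ap Np τ
  ev_St : ∀ τ, deriv St τ =
    2*(qF γ κ Sp St Ap Np τ - 2) * St τ - 4 * Sp τ * Ap τ - 4 * Dl τ * Np τ
  ev_Dl : ∀ τ, deriv Dl τ =
    2*(qF γ κ Sp St Ap Np τ + Sp τ - 1) * Dl τ + 2*(St τ - NT κ Ap Np τ) * Np τ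
  ev_Ap : ∀ τ, deriv Ap τ = 2*(qF γ κ Sp St Ap Np τ + 2*Sp τ) * Ap τ
  ev_Np : ∀ τ, deriv Np τ = (qF γ κ Sp St Ap Np τ + 2*Sp τ) * Np τ + 6 * Dl τ
  con_main : ∀ τ, St τ * NT κ Ap Np τ - (Dl τ)^2 - (Sp τ)^2 * Ap τ = 0
  con_St : ∀ τ, 0 ≤ St τ
  con_Ap : ∀ τ, 0 ≤ Ap τ
  con_NT : ∀ τ, 0 ≤ NT κ Ap Np τ
  con_sum : ∀ τ, (Sp τ)^2 + St τ + Ap τ + NT κ Ap Np τ ≤ 1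

def Vacuum (κ : ℝ) (Sp St Ap Np : ℝ → ℝ) : Prop :=
  ∀ τ, OmF κ Sp St Ap Np τ = 0

def Inflationary (γ κ : ℝ) (Sp St Ap Np : ℝ → ℝ) : Prop :=
  (∀ τ, 0 < OmF κ Sp St Ap Np τ) ∧ γ ∈ Set.Ico (0:ℝ) (2/3)

def traj (Sp St Dl Ap Np : ℝ → ℝ) (τ : ℝ) : ℝ × ℝ × ℝ × ℝ × ℝ :=
  (Sp τ, St τ, Dl τ, Ap τ, Np τ)

def AlphaLimitPt (Sp St Dl Ap Np : ℝ → ℝ) (p : ℝ × ℝ × ℝ × ℝ × ℝ) : Prop :=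
  ∃ t : ℕ → ℝ, Tendsto t atTop atBot ∧
    Tendsto (fun n => traj Sp St Dl Ap Np (t n)) atTop (𝓝 p)

def Kasner : Set (ℝ × ℝ × ℝ × ℝ × ℝ) :=
  {p | ∃ s, s ∈ Set.Icc (-1:ℝ) 1 ∧ p = (s, 1 - s^2, 0, 0, 0)}

def PlaneWave (κ : ℝ) : Set (ℝ × ℝ × ℝ × ℝ × ℝ) :=
  {p | ∃ s n : ℝ, -1 < s ∧ n^2 = (1+s)*(κ*(1+s) - 3*s) ∧ p = (s, -s*(1+s), 0, (1+s)^2, n)}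

def IsConstSol (Sp St Dl Ap Np : ℝ → ℝ) : Prop :=
  ∀ τ, traj Sp St Dl Ap Np τ = traj Sp St Dl Ap Np 0

/-- `BigO f a` : `f = O(e^{a τ})` as `τ → −∞`. -/
def BigO (f : ℝ → ℝ) (a : ℝ) : Prop :=
  ∃ C > 0, ∃ τ₀ : ℝ, ∀ τ ≤ τ₀, |f τ| ≤ C * Real.exp (a * τ)

open scoped Classical in
noncomputable def PiVal (γ s : ℝ) (vac : Prop) : ℝ :=
  if vac then 4 + 4*s else min (6 - 3*γ) (4 + 4*s)

open scoped Classical in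
noncomputable def PiBarVal (γ s : ℝ) (vac : Prop) : ℝ :=
  if vac then 4 + 4*s - 4*Real.sqrt (3*(1-s^2))
  else min (6 - 3*γ) (4 + 4*s - 4*Real.sqrt (3*(1-s^2)))

/-!
Fix `s = s̄ - ε > 1/2` and measure the distance from the Kasner circle by
`V = Ω + K (Ã + p Δ² + N₊²)`. In the region `Σ₊ ≥ s`, `V ≤ η` one has `Σ₊' ≤ 0`, `V' ≥ 0` and
`(Σ₊ + V)' ≥ 0`: the growth rates of `Ã` and of `p Δ² + N₊²` are at least
`4 + 4 s - √(48 (1 - s²)) - O(η)`, positive precisely because `s > 1/2`, and for large `K` they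
dominate the decay of `Ω` and the drift of `Σ₊`. Going backwards in time `Σ₊` can therefore only
grow while `V` and `Σ₊ + V` can only shrink, so by continuous induction the solution never leaves
the region, and `Σ₊(τ₀) ≤ Σ₊(τ) ≤ Σ₊(τ₀) + V(τ₀)` for all `τ ≤ τ₀`.
-/

open Set

lemma Iic_subset_of_isClosed_of_Icc_subset {s : Set ℝ} {b : ℝ} (hs : IsClosed s) (hb : b ∈ s)
    (h : ∀ a ≤ b, Icc a b ⊆ s → s ∈ 𝓝 a) : Iic b ⊆ s := by
  intro c hc
  have key := IsClosed.Icc_subset_of_forall_mem_nhdsGT_of_Icc_subset (α := ℝᵒᵈ)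
    (a := OrderDual.toDual b) (b := OrderDual.toDual c) (s := OrderDual.ofDual ⁻¹' s)
    ((hs.preimage continuous_ofDual).inter isClosed_Icc) hb
    (fun t ht hts => mem_nhdsWithin_of_mem_nhds (h t ht.1 fun u hu => hts ⟨hu.2, hu.1⟩))
  exact key ⟨hc, le_rfl⟩

lemma le_of_deriv_nonneg_on_Icc {f : ℝ → ℝ} {a b : ℝ} (hf : Differentiable ℝ f) (hab : a ≤ b)
    (hf' : ∀ x ∈ Icc a b, 0 ≤ deriv f x) : f a ≤ f b :=
  monotoneOn_of_deriv_nonneg (convex_Icc a b) hf.continuous.continuousOn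
    (hf.differentiableOn.mono interior_subset) (fun x hx => hf' x (interior_subset hx))
    (left_mem_Icc.2 hab) (right_mem_Icc.2 hab) hab

lemma le_of_deriv_nonpos_on_Icc {f : ℝ → ℝ} {a b : ℝ} (hf : Differentiable ℝ f) (hab : a ≤ b)
    (hf' : ∀ x ∈ Icc a b, deriv f x ≤ 0) : f b ≤ f a :=
  antitoneOn_of_deriv_nonpos (convex_Icc a b) hf.continuous.continuousOn
    (hf.differentiableOn.mono interior_subset) (fun x hx => hf' x (interior_subset hx))
    (left_mem_Icc.2 hab) (right_mem_Icc.2 hab) hab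

-- Completing the square: `S · (S p d² + S n² - 24 |d n|) = (12 |d| - S |n|)²` when `p S² = 144`.
lemma mul_add_sq_le_of_abs_le {p S c A B k d n : ℝ} (hS : 0 < S) (hpS : p * S ^ 2 = 144)
    (hk : |k| ≤ 24) (hA : S + c ≤ A) (hB : S + c ≤ B) :
    c * (p * d ^ 2 + n ^ 2) ≤ A * (p * d ^ 2) + B * n ^ 2 + k * (d * n) := by
  have hp : 0 ≤ p := by nlinarith
  have hcross : -(k * (d * n)) ≤ S * (p * d ^ 2 + n ^ 2) := by
    have h24 : -(k * (d * n)) ≤ 24 * (|d| * |n|) := by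
      rw [← abs_mul]
      exact (neg_le_abs _).trans (abs_mul k _ ▸
        mul_le_mul_of_nonneg_right hk (abs_nonneg _))
    have hsq : S * (24 * (|d| * |n|)) ≤ S * (S * (p * d ^ 2 + n ^ 2)) := by
      nlinarith [sq_nonneg (12 * |d| - S * |n|), sq_abs d, sq_abs n]
    linarith [le_of_mul_le_mul_left hsq hS]
  have hA' := mul_le_mul_of_nonneg_right hA (mul_nonneg hp (sq_nonneg d))
  have hB' := mul_le_mul_of_nonneg_right hB (sq_nonneg n)
  nlinarith

/-- Constants of the trapping argument near the Kasner point with `Σ₊ = s`: `p` weights `Δ²` in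
the quantity `p Δ² + N₊²`, `S` is the loss in the AM–GM bound of its cross term `Δ N₊`, `η` is the
size of the trapping region and `K` the weight of `Ã + p Δ² + N₊²` against `Ω`.
They exist exactly when `s > 1/2`, which is what `S² = 48 (1 - s²) < (4 + 4 s)²` requires. -/
structure TrappingConstants (s κ : ℝ) where
  p : ℝ
  S : ℝ
  η : ℝ
  K : ℝ
  S_pos : 0 < S
  p_mul_S_sq : p * S ^ 2 = 144
  p_mul_one_sub_sq : p * (1 - s ^ 2) = 3
  η_pos : 0 < η
  η_le_half : η ≤ 1 / 2
  η_le_one_sub_sq : η ≤ 1 - s ^ 2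
  S_add_le : S + 29 * η ≤ 4 + 4 * s
  K_mul_η : 6 + 4 * |κ| ≤ K * η

namespace TrappingConstants

variable {s κ : ℝ} (C : TrappingConstants s κ)

lemma p_pos : 0 < C.p := by nlinarith [C.p_mul_S_sq, C.S_pos]

lemma half_lt (C : TrappingConstants s κ) : 1 / 2 < s := by
  have hS2 : C.S ^ 2 = 48 * (1 - s ^ 2) := by
    nlinarith [C.p_mul_S_sq, C.p_mul_one_sub_sq, C.p_pos]
  have hlt : C.S < 4 + 4 * s := by linarith [C.S_add_le, C.η_pos]
  nlinarith [C.S_pos]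

lemma one_add_abs_le_K : 1 + |κ| ≤ C.K := by
  have hK : 0 < C.K := pos_of_mul_pos_left (by linarith [C.K_mul_η, abs_nonneg κ]) C.η_pos.le
  nlinarith [C.K_mul_η, C.η_le_half, abs_nonneg κ]

lemma nonempty (κ : ℝ) (hs : 1 / 2 < s) (hs' : s < 1) : Nonempty (TrappingConstants s κ) := by
  have hβ : 0 < 1 - s ^ 2 := by nlinarith
  set S := √(48 * (1 - s ^ 2))
  have hS : 0 < S := Real.sqrt_pos.2 (by positivity)
  have hS2 : S ^ 2 = 48 * (1 - s ^ 2) := Real.sq_sqrt (by positivity)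
  have hgap : S < 4 + 4 * s := (Real.sqrt_lt' (by linarith)).2 (by nlinarith)
  set η := min ((4 + 4 * s - S) / 29) (min (1 / 2) (1 - s ^ 2))
  have hη : 0 < η := lt_min (by linarith) (lt_min (by norm_num) hβ)
  exact ⟨{
    p := 3 / (1 - s ^ 2), S := S, η := η, K := (6 + 4 * |κ|) / η
    S_pos := hS
    p_mul_S_sq := by rw [hS2]; field_simp; norm_num
    p_mul_one_sub_sq := by field_simp
    η_pos := hη
    η_le_half := (min_le_right _ _).trans (min_le_left _ _)
    η_le_one_sub_sq := (min_le_right _ _).trans (min_le_right _ _)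
    S_add_le := by linarith [min_le_left ((4 + 4 * s - S) / 29) (min (1 / 2) (1 - s ^ 2))]
    K_mul_η := (div_mul_cancel₀ _ hη.ne').ge }⟩

end TrappingConstants

lemma qF_sub_two (γ κ : ℝ) (Sp St Ap Np : ℝ → ℝ) (τ : ℝ) :
    qF γ κ Sp St Ap Np τ - 2 =
      -2 * (Ap τ + NT κ Ap Np τ) - 3 / 2 * (2 - γ) * OmF κ Sp St Ap Np τ := by
  simp only [qF, OmF]; ring

/-- `Ω + K (Ã + p Δ² + N₊²)` at the point `(Σ₊, Σ̃, Δ, Ã, N₊)`; it vanishes on the Kasner circle. -/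
noncomputable def offKasner (κ p K : ℝ) (P : ℝ × ℝ × ℝ × ℝ × ℝ) : ℝ :=
  (1 - P.1 ^ 2 - P.2.1 - P.2.2.2.1 - 1 / 3 * (P.2.2.2.2 ^ 2 - κ * P.2.2.2.1))
    + K * (P.2.2.2.1 + p * P.2.2.1 ^ 2 + P.2.2.2.2 ^ 2)

lemma continuous_offKasner (κ p K : ℝ) : Continuous (offKasner κ p K) := by
  unfold offKasner; fun_prop

lemma offKasner_traj (κ p K : ℝ) (Sp St Dl Ap Np : ℝ → ℝ) (τ : ℝ) :
    offKasner κ p K (traj Sp St Dl Ap Np τ) =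
      OmF κ Sp St Ap Np τ + K * (Ap τ + (p * Dl τ ^ 2 + Np τ ^ 2)) := by
  simp only [offKasner, traj, OmF, NT]; ring

def trappingRegion {s κ : ℝ} (C : TrappingConstants s κ) (Sp St Dl Ap Np : ℝ → ℝ) : Set ℝ :=
  {τ | s ≤ Sp τ ∧ offKasner κ C.p C.K (traj Sp St Dl Ap Np τ) ≤ C.η}

namespace BianchiB

variable {γ κ : ℝ} {Sp St Dl Ap Np : ℝ → ℝ}

lemma hasDerivAt_Sp (sol : BianchiB γ κ Sp St Dl Ap Np) (τ : ℝ) :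
    HasDerivAt Sp ((qF γ κ Sp St Ap Np τ - 2) * Sp τ - 2 * NT κ Ap Np τ) τ :=
  sol.ev_Sp τ ▸ (sol.diff_Sp τ).hasDerivAt

lemma hasDerivAt_St (sol : BianchiB γ κ Sp St Dl Ap Np) (τ : ℝ) :
    HasDerivAt St (2 * (qF γ κ Sp St Ap Np τ - 2) * St τ - 4 * Sp τ * Ap τ - 4 * Dl τ * Np τ) τ :=
  sol.ev_St τ ▸ (sol.diff_St τ).hasDerivAt

lemma hasDerivAt_Dl (sol : BianchiB γ κ Sp St Dl Ap Np) (τ : ℝ) :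
    HasDerivAt Dl (2 * (qF γ κ Sp St Ap Np τ + Sp τ - 1) * Dl τ
      + 2 * (St τ - NT κ Ap Np τ) * Np τ) τ :=
  sol.ev_Dl τ ▸ (sol.diff_Dl τ).hasDerivAt

lemma hasDerivAt_Ap (sol : BianchiB γ κ Sp St Dl Ap Np) (τ : ℝ) :
    HasDerivAt Ap (2 * (qF γ κ Sp St Ap Np τ + 2 * Sp τ) * Ap τ) τ :=
  sol.ev_Ap τ ▸ (sol.diff_Ap τ).hasDerivAt

lemma hasDerivAt_Np (sol : BianchiB γ κ Sp St Dl Ap Np) (τ : ℝ) :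
    HasDerivAt Np ((qF γ κ Sp St Ap Np τ + 2 * Sp τ) * Np τ + 6 * Dl τ) τ :=
  sol.ev_Np τ ▸ (sol.diff_Np τ).hasDerivAt

lemma hasDerivAt_NT (sol : BianchiB γ κ Sp St Dl Ap Np) (τ : ℝ) :
    HasDerivAt (NT κ Ap Np) (2 * (qF γ κ Sp St Ap Np τ + 2 * Sp τ) * NT κ Ap Np τ
      + 4 * Dl τ * Np τ) τ := by
  have h : HasDerivAt (NT κ Ap Np) _ τ :=
    (((sol.hasDerivAt_Np τ).pow 2).sub ((sol.hasDerivAt_Ap τ).const_mul κ)).const_mul (1 / 3 : ℝ)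
  convert h using 1
  simp only [NT]; push_cast; ring

lemma hasDerivAt_OmF (sol : BianchiB γ κ Sp St Dl Ap Np) (τ : ℝ) :
    HasDerivAt (OmF κ Sp St Ap Np) ((3 * (2 - γ) * (1 - OmF κ Sp St Ap Np τ)
      - 4 * (Ap τ + NT κ Ap Np τ)) * OmF κ Sp St Ap Np τ) τ := by
  have h : HasDerivAt (OmF κ Sp St Ap Np) _ τ :=
    ((((hasDerivAt_const τ (1 : ℝ)).sub ((sol.hasDerivAt_Sp τ).pow 2)).sub
      (sol.hasDerivAt_St τ)).sub (sol.hasDerivAt_Ap τ)).sub (sol.hasDerivAt_NT τ)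
  convert h using 1
  simp only [OmF, qF]; push_cast; ring

lemma hasDerivAt_weightedSq (sol : BianchiB γ κ Sp St Dl Ap Np) (p τ : ℝ) :
    HasDerivAt (fun τ => p * Dl τ ^ 2 + Np τ ^ 2)
      (4 * (qF γ κ Sp St Ap Np τ + Sp τ - 1) * (p * Dl τ ^ 2)
        + 2 * (qF γ κ Sp St Ap Np τ + 2 * Sp τ) * Np τ ^ 2
        + (4 * p * (St τ - NT κ Ap Np τ) + 12) * (Dl τ * Np τ)) τ := by
  have h : HasDerivAt (fun τ => p * Dl τ ^ 2 + Np τ ^ 2) _ τ :=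
    (((sol.hasDerivAt_Dl τ).pow 2).const_mul p).add ((sol.hasDerivAt_Np τ).pow 2)
  convert h using 1
  push_cast; ring

lemma hasDerivAt_offKasner (sol : BianchiB γ κ Sp St Dl Ap Np) (p K τ : ℝ) :
    HasDerivAt (fun τ => offKasner κ p K (traj Sp St Dl Ap Np τ))
      (deriv (OmF κ Sp St Ap Np) τ
        + K * (deriv Ap τ + deriv (fun τ => p * Dl τ ^ 2 + Np τ ^ 2) τ)) τ := by
  simp only [offKasner_traj]
  exact (sol.hasDerivAt_OmF τ).differentiableAt.hasDerivAt.add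
    (((sol.diff_Ap τ).hasDerivAt.add
      (sol.hasDerivAt_weightedSq p τ).differentiableAt.hasDerivAt).const_mul K)

lemma OmF_nonneg (sol : BianchiB γ κ Sp St Dl Ap Np) (τ : ℝ) : 0 ≤ OmF κ Sp St Ap Np τ := by
  simp only [OmF]; linarith [sol.con_sum τ]

lemma St_le (sol : BianchiB γ κ Sp St Dl Ap Np) (τ : ℝ) : St τ ≤ 1 - Sp τ ^ 2 := by
  linarith [sol.con_sum τ, sol.con_Ap τ, sol.con_NT τ]

lemma Sp_le_one (sol : BianchiB γ κ Sp St Dl Ap Np) (τ : ℝ) : Sp τ ≤ 1 := by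
  nlinarith [sol.St_le τ, sol.con_St τ]

lemma offKasner_traj_nonneg (sol : BianchiB γ κ Sp St Dl Ap Np) {p K : ℝ} (hp : 0 ≤ p)
    (hK : 0 ≤ K) (τ : ℝ) : 0 ≤ offKasner κ p K (traj Sp St Dl Ap Np τ) := by
  rw [offKasner_traj]
  have := sol.con_Ap τ
  have := sol.OmF_nonneg τ
  positivity

lemma deriv_Sp_nonpos (sol : BianchiB γ κ Sp St Dl Ap Np) {τ : ℝ} (hσ : 0 ≤ Sp τ) :
    deriv Sp τ ≤ 0 := by
  have hγ := sol.hγ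
  rw [sol.ev_Sp, qF_sub_two]
  nlinarith [sol.con_Ap τ, sol.con_NT τ, sol.OmF_nonneg τ, mul_nonneg (sol.OmF_nonneg τ) hσ,
    mul_nonneg (add_nonneg (sol.con_Ap τ) (sol.con_NT τ)) hσ, hγ.2]

lemma neg_le_deriv_OmF (sol : BianchiB γ κ Sp St Dl Ap Np) {τ : ℝ}
    (hΩ : OmF κ Sp St Ap Np τ ≤ 1) : -(4 * (Ap τ + NT κ Ap Np τ)) ≤ deriv (OmF κ Sp St Ap Np) τ := by
  have hγ := sol.hγ
  have hΩ₀ := sol.OmF_nonneg τ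
  rw [(sol.hasDerivAt_OmF τ).deriv]
  nlinarith [mul_nonneg (mul_nonneg (sub_nonneg.2 hγ.2) (sub_nonneg.2 hΩ)) hΩ₀,
    mul_nonneg (add_nonneg (sol.con_Ap τ) (sol.con_NT τ)) (sub_nonneg.2 hΩ)]

-- The matter contribution `(2 - γ) Ω (3 - 3 Ω - 3/2 Σ₊)` is nonnegative as `Σ₊ ≤ 1`, `Ω ≤ 1/2`.
lemma neg_le_deriv_Sp_add_deriv_OmF (sol : BianchiB γ κ Sp St Dl Ap Np) {τ : ℝ}
    (hΩ : OmF κ Sp St Ap Np τ ≤ 1 / 2) :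
    -(6 * Ap τ + 8 * NT κ Ap Np τ) ≤ deriv Sp τ + deriv (OmF κ Sp St Ap Np) τ := by
  have hγ := sol.hγ
  have hΩ₀ := sol.OmF_nonneg τ
  have hx := sol.con_Ap τ
  have hN := sol.con_NT τ
  have hσ₁ := sol.Sp_le_one τ
  rw [(sol.hasDerivAt_OmF τ).deriv, sol.ev_Sp, qF_sub_two]
  nlinarith [mul_nonneg (mul_nonneg (sub_nonneg.2 hγ.2) hΩ₀)
      (show 0 ≤ 3 - 3 * OmF κ Sp St Ap Np τ - 3 / 2 * Sp τ by linarith),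
    mul_nonneg (add_nonneg hx hN) (sub_nonneg.2 hσ₁),
    mul_nonneg (add_nonneg hx hN) (show 0 ≤ 1 - OmF κ Sp St Ap Np τ by linarith),
    mul_nonneg (add_nonneg hx hN) hΩ₀]

variable {s : ℝ}

lemma continuous_traj (sol : BianchiB γ κ Sp St Dl Ap Np) : Continuous (traj Sp St Dl Ap Np) :=
  sol.diff_Sp.continuous.prodMk <| sol.diff_St.continuous.prodMk <|
    sol.diff_Dl.continuous.prodMk <| sol.diff_Ap.continuous.prodMk sol.diff_Np.continuous

lemma isClosed_trappingRegion (sol : BianchiB γ κ Sp St Dl Ap Np) (C : TrappingConstants s κ) :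
    IsClosed (trappingRegion C Sp St Dl Ap Np) :=
  (isClosed_le continuous_const sol.diff_Sp.continuous).inter
    (isClosed_le ((continuous_offKasner _ _ _).comp sol.continuous_traj) continuous_const)

lemma Ap_NT_OmF_le_of_offKasner_le (sol : BianchiB γ κ Sp St Dl Ap Np) (C : TrappingConstants s κ)
    {τ : ℝ} (hV : offKasner κ C.p C.K (traj Sp St Dl Ap Np τ) ≤ C.η) :
    Ap τ ≤ C.η ∧ NT κ Ap Np τ ≤ C.η ∧ OmF κ Sp St Ap Np τ ≤ C.η := by
  rw [offKasner_traj, mul_add, mul_add] at hV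
  have hK := C.one_add_abs_le_K
  have hx := sol.con_Ap τ
  have hΩ := sol.OmF_nonneg τ
  have hKx : (1 + |κ|) * Ap τ ≤ C.K * Ap τ := mul_le_mul_of_nonneg_right hK hx
  have hKn : (1 + |κ|) * Np τ ^ 2 ≤ C.K * Np τ ^ 2 := mul_le_mul_of_nonneg_right hK (sq_nonneg _)
  have hKd : 0 ≤ C.K * (C.p * Dl τ ^ 2) :=
    mul_nonneg (by linarith [abs_nonneg κ]) (mul_nonneg C.p_pos.le (sq_nonneg _))
  have hκx : -κ * Ap τ ≤ |κ| * Ap τ := mul_le_mul_of_nonneg_right (neg_le_abs κ) hx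
  have hκx₀ : 0 ≤ |κ| * Ap τ := by positivity
  have hκn₀ : 0 ≤ |κ| * Np τ ^ 2 := by positivity
  refine ⟨by linarith [sq_nonneg (Np τ)], ?_, by linarith [sol.con_NT τ, sq_nonneg (Np τ)]⟩
  have := sol.con_NT τ
  simp only [NT] at this ⊢
  linarith [sq_nonneg (Np τ)]

lemma two_sub_le_qF (sol : BianchiB γ κ Sp St Dl Ap Np) (C : TrappingConstants s κ)
    {τ : ℝ} (hV : offKasner κ C.p C.K (traj Sp St Dl Ap Np τ) ≤ C.η) :
    2 - 7 * C.η ≤ qF γ κ Sp St Ap Np τ := by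
  obtain ⟨hx, hN, hΩ⟩ := sol.Ap_NT_OmF_le_of_offKasner_le C hV
  linarith [qF_sub_two γ κ Sp St Ap Np τ, mul_nonneg sol.hγ.1 (sol.OmF_nonneg τ)]

lemma eta_mul_le_deriv_Ap (sol : BianchiB γ κ Sp St Dl Ap Np) (C : TrappingConstants s κ)
    {τ : ℝ} (hτ : τ ∈ trappingRegion C Sp St Dl Ap Np) : C.η * Ap τ ≤ deriv Ap τ := by
  rw [sol.ev_Ap]
  have hrate : C.η ≤ 2 * (qF γ κ Sp St Ap Np τ + 2 * Sp τ) := by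
    linarith [hτ.1, sol.two_sub_le_qF C hτ.2, C.S_add_le, C.S_pos, C.η_pos]
  exact mul_le_mul_of_nonneg_right hrate (sol.con_Ap τ)

-- The cross term `Δ N₊` of `(p Δ² + N₊²)'` has coefficient `4 p (Σ̃ - Ñ) + 12 ∈ [-24, 24]`,
-- as `p (1 - s²) = 3`.
lemma eta_mul_le_deriv_weightedSq (sol : BianchiB γ κ Sp St Dl Ap Np)
    (C : TrappingConstants s κ) {τ : ℝ} (hτ : τ ∈ trappingRegion C Sp St Dl Ap Np) :
    C.η * (C.p * Dl τ ^ 2 + Np τ ^ 2) ≤ deriv (fun τ => C.p * Dl τ ^ 2 + Np τ ^ 2) τ := by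
  rw [(sol.hasDerivAt_weightedSq C.p τ).deriv]
  obtain ⟨hσ, hV⟩ := hτ
  obtain ⟨-, hN, -⟩ := sol.Ap_NT_OmF_le_of_offKasner_le C hV
  have hq := sol.two_sub_le_qF C hV
  have hσ2 : s ^ 2 ≤ Sp τ ^ 2 := pow_le_pow_left₀ (by linarith [C.half_lt]) hσ 2
  have hlo : -(1 - s ^ 2) ≤ St τ - NT κ Ap Np τ := by
    linarith [sol.con_St τ, C.η_le_one_sub_sq]
  have hhi : St τ - NT κ Ap Np τ ≤ 1 - s ^ 2 := by
    linarith [sol.St_le τ, sol.con_NT τ]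
  have hk : |4 * C.p * (St τ - NT κ Ap Np τ) + 12| ≤ 24 := by
    rw [abs_le]
    constructor <;> nlinarith [C.p_pos, C.p_mul_one_sub_sq]
  exact mul_add_sq_le_of_abs_le C.S_pos C.p_mul_S_sq hk
    (by linarith [C.S_add_le, C.η_pos]) (by linarith [C.S_add_le, C.η_pos])

lemma six_mul_add_eight_mul_NT_le (sol : BianchiB γ κ Sp St Dl Ap Np)
    (C : TrappingConstants s κ) {τ : ℝ} (hτ : τ ∈ trappingRegion C Sp St Dl Ap Np) :
    6 * Ap τ + 8 * NT κ Ap Np τ ≤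
      C.K * (deriv Ap τ + deriv (fun τ => C.p * Dl τ ^ 2 + Np τ ^ 2) τ) := by
  have hK : 0 ≤ C.K := by linarith [C.one_add_abs_le_K, abs_nonneg κ]
  have hx := sol.con_Ap τ
  have hd : 0 ≤ C.p * Dl τ ^ 2 := mul_nonneg C.p_pos.le (sq_nonneg _)
  have hκx : -κ * Ap τ ≤ |κ| * Ap τ := mul_le_mul_of_nonneg_right (neg_le_abs κ) hx
  have hgain : (6 + 4 * |κ|) * (Ap τ + (C.p * Dl τ ^ 2 + Np τ ^ 2)) ≤
      C.K * (deriv Ap τ + deriv (fun τ => C.p * Dl τ ^ 2 + Np τ ^ 2) τ) :=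
    calc (6 + 4 * |κ|) * (Ap τ + (C.p * Dl τ ^ 2 + Np τ ^ 2))
        ≤ C.K * (C.η * Ap τ + C.η * (C.p * Dl τ ^ 2 + Np τ ^ 2)) := by
          rw [← mul_add, ← mul_assoc]
          exact mul_le_mul_of_nonneg_right C.K_mul_η (by positivity)
      _ ≤ _ := mul_le_mul_of_nonneg_left
          (add_le_add (sol.eta_mul_le_deriv_Ap C hτ) (sol.eta_mul_le_deriv_weightedSq C hτ)) hK
  simp only [NT]
  nlinarith [mul_nonneg (abs_nonneg κ) hd, mul_nonneg (abs_nonneg κ) (sq_nonneg (Np τ)),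
    mul_nonneg (abs_nonneg κ) hx]

lemma le_of_Icc_subset_trappingRegion (sol : BianchiB γ κ Sp St Dl Ap Np)
    (C : TrappingConstants s κ) {a b : ℝ} (hab : a ≤ b)
    (hR : Icc a b ⊆ trappingRegion C Sp St Dl Ap Np) :
    Sp b ≤ Sp a ∧
      offKasner κ C.p C.K (traj Sp St Dl Ap Np a) ≤ offKasner κ C.p C.K (traj Sp St Dl Ap Np b) ∧
      Sp a + offKasner κ C.p C.K (traj Sp St Dl Ap Np a) ≤
        Sp b + offKasner κ C.p C.K (traj Sp St Dl Ap Np b) := by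
  have hV := sol.hasDerivAt_offKasner C.p C.K
  have hVd : Differentiable ℝ fun τ => offKasner κ C.p C.K (traj Sp St Dl Ap Np τ) :=
    fun τ => (hV τ).differentiableAt
  have hΩ : ∀ τ ∈ Icc a b, OmF κ Sp St Ap Np τ ≤ 1 / 2 := fun τ hτ =>
    (sol.Ap_NT_OmF_le_of_offKasner_le C (hR hτ).2).2.2.trans C.η_le_half
  refine ⟨le_of_deriv_nonpos_on_Icc sol.diff_Sp hab fun τ hτ =>
      sol.deriv_Sp_nonpos (by linarith [C.half_lt, (hR hτ).1]),
    le_of_deriv_nonneg_on_Icc hVd hab fun τ hτ => ?_,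
    le_of_deriv_nonneg_on_Icc (sol.diff_Sp.add hVd) hab fun τ hτ => ?_⟩
  · rw [(hV τ).deriv]
    linarith [sol.six_mul_add_eight_mul_NT_le C (hR hτ), sol.con_Ap τ, sol.con_NT τ,
      sol.neg_le_deriv_OmF ((hΩ τ hτ).trans (by norm_num))]
  · rw [((sol.diff_Sp τ).hasDerivAt.add (hV τ)).deriv]
    linarith [sol.six_mul_add_eight_mul_NT_le C (hR hτ),
      sol.neg_le_deriv_Sp_add_deriv_OmF (hΩ τ hτ)]

lemma Sp_trapped (sol : BianchiB γ κ Sp St Dl Ap Np) (C : TrappingConstants s κ) {τ₀ : ℝ}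
    (hσ₀ : s < Sp τ₀) (hV₀ : offKasner κ C.p C.K (traj Sp St Dl Ap Np τ₀) < C.η)
    {τ : ℝ} (hτ : τ ≤ τ₀) :
    Sp τ₀ ≤ Sp τ ∧ Sp τ ≤ Sp τ₀ + offKasner κ C.p C.K (traj Sp St Dl Ap Np τ₀) := by
  have hV := (continuous_offKasner κ C.p C.K).comp sol.continuous_traj
  have hall : Iic τ₀ ⊆ trappingRegion C Sp St Dl Ap Np :=
    Iic_subset_of_isClosed_of_Icc_subset (sol.isClosed_trappingRegion C) ⟨hσ₀.le, hV₀.le⟩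
      fun a ha hR => by
        obtain ⟨h₁, h₂, -⟩ := sol.le_of_Icc_subset_trappingRegion C ha hR
        have hopen : IsOpen {u | s < Sp u ∧ offKasner κ C.p C.K (traj Sp St Dl Ap Np u) < C.η} :=
          (isOpen_lt continuous_const sol.diff_Sp.continuous).inter
            (isOpen_lt hV continuous_const)
        exact mem_of_superset (hopen.mem_nhds ⟨by linarith, by linarith⟩)
          fun u hu => ⟨hu.1.le, hu.2.le⟩
  obtain ⟨h₁, -, h₃⟩ := sol.le_of_Icc_subset_trappingRegion C hτ fun u hu => hall hu.2
  have hK : 0 ≤ C.K := by linarith [C.one_add_abs_le_K, abs_nonneg κ]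
  exact ⟨h₁, by linarith [sol.offKasner_traj_nonneg C.p_pos.le hK τ]⟩

end BianchiB

theorem stmt18_general (γ κ sb ε : ℝ)
    (hsb : 1/2 < sb ∧ sb ≤ 1) (hε : 0 < ε ∧ ε < sb - 1/2) :
    ∃ U ∈ 𝓝 ((sb, 1 - sb^2, 0, 0, 0) : ℝ × ℝ × ℝ × ℝ × ℝ),
      ∀ Sp St Dl Ap Np : ℝ → ℝ, BianchiB γ κ Sp St Dl Ap Np →
        ∀ τ₀ : ℝ, traj Sp St Dl Ap Np τ₀ ∈ U →
          ∀ τ ≤ τ₀, |Sp τ - sb| < ε := by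
  obtain ⟨C⟩ := TrappingConstants.nonempty (s := sb - ε) κ (by linarith) (by linarith)
  set V := offKasner κ C.p C.K
  have hV := continuous_offKasner κ C.p C.K
  have hV₀ : V (sb, 1 - sb ^ 2, 0, 0, 0) = 0 := by simp only [V, offKasner]; ring
  refine ⟨{P | sb - ε < P.1 ∧ V P < C.η ∧ P.1 + V P < sb + ε}, IsOpen.mem_nhds ?_ ?_, ?_⟩
  · exact (isOpen_lt continuous_const continuous_fst).inter ((isOpen_lt hV continuous_const).inter
      (isOpen_lt (continuous_fst.add hV) continuous_const))
  · change sb - ε < sb ∧ V _ < C.η ∧ sb + V _ < sb + ε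
    rw [hV₀]
    exact ⟨by linarith, C.η_pos, by linarith⟩
  · rintro Sp St Dl Ap Np sol τ₀ ⟨h₁, h₂, h₃⟩ τ hτ
    obtain ⟨hlo, hhi⟩ := sol.Sp_trapped C h₁ h₂ hτ
    have h₃' : Sp τ₀ + V (traj Sp St Dl Ap Np τ₀) < sb + ε := h₃
    rw [abs_sub_lt_iff]
    constructor <;> linarith [show sb - ε < Sp τ₀ from h₁]

theorem stmt18 (γ κ sb ε : ℝ)
    (hγ : γ ∈ Set.Icc (0:ℝ) 2)
    (hsb : 1/2 < sb ∧ sb ≤ 1) (hε : 0 < ε ∧ ε < sb - 1/2) :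
    ∃ U ∈ 𝓝 ((sb, 1 - sb^2, 0, 0, 0) : ℝ × ℝ × ℝ × ℝ × ℝ),
      ∀ Sp St Dl Ap Np : ℝ → ℝ, BianchiB γ κ Sp St Dl Ap Np →
        ∀ τ₀ : ℝ, traj Sp St Dl Ap Np τ₀ ∈ U →
          ∀ τ ≤ τ₀, |Sp τ - sb| < ε :=
  stmt18_general γ κ sb ε hsb hε
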